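/- Two interaction words w1, w2 in a global language L are Mazurkiewicz-trace equivalent (with independence given by disjointness of participant sets) if and only if their projections on every participant of L coincide: w1 ∼ w2 iff w1↾A = w2↾A for each A ∈ ptp(L). -/

import Mathlib

open scoped Classical

/-- Interactions `A→B:m` over participants and messages drawn from `ℕ`. -/
structure Interaction where
  snd : ℕ
  rcv : ℕ
  msg : ℕ
  ne : snd ≠ rcv

/-- Communication actions: outputs `AB!m` and inputs `AB?m`. -/
inductive Act where
  | out : ℕ → ℕ → ℕ → Act
  | inp : ℕ → ℕ → ℕ → Act
deriving DecidableEq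

/-- Finite or infinite words over `σ`. -/
inductive Word (σ : Type) : Type where
  | fin : List σ → Word σ
  | inf : (ℕ → σ) → Word σ

namespace Word

def get? {σ : Type} : Word σ → ℕ → Option σ
  | fin l, i => l[i]?
  | inf f, i => some (f i)

/-- Prefix relation on possibly infinite words. -/
def Pref {σ : Type} : Word σ → Word σ → Prop
  | fin l, fin l' => l <+: l'
  | fin l, inf g => ∀ i, i < l.length → l[i]? = some (g i)
  | inf f, inf g => f = g
  | inf _, fin _ => False

/-- Concatenation; if the first word is infinite the result is the first word. -/
def cat {σ : Type} : Word σ → Word σ → Word σ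
  | fin l, fin l' => fin (l ++ l')
  | fin l, inf g => inf (fun i => if h : i < l.length then l.get ⟨i, h⟩ else g (i - l.length))
  | inf f, _ => inf f

def Finite {σ : Type} : Word σ → Prop
  | fin _ => True
  | inf _ => False

end Word

/-- Prefix closure of a language. -/
def prefCl {σ : Type} (L : Set (Word σ)) : Set (Word σ) :=
  {z | ∃ z' ∈ L, Word.Pref z z'}

def PrefixClosed {σ : Type} (L : Set (Word σ)) : Prop := L = prefCl L

def iptp (a : Interaction) : Set ℕ := {a.snd, a.rcv}

def asubj : Act → ℕ
  | .out A _ _ => A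
  | .inp _ B _ => B

def aptp : Act → Set ℕ
  | .out A B _ => {A, B}
  | .inp A B _ => {A, B}

/-- Participants of a word of interactions. -/
def wptp (w : Word Interaction) : Set ℕ :=
  {X | ∃ i a, w.get? i = some a ∧ X ∈ iptp a}

/-- Participants of a language of interactions. -/
def lptp (L : Set (Word Interaction)) : Set ℕ :=
  {X | ∃ w ∈ L, X ∈ wptp w}

/-- Global language: prefix-closed with finitely many participants. -/
def IsGLang (L : Set (Word Interaction)) : Prop :=
  PrefixClosed L ∧ (lptp L).Finite

/-- Projection of an interaction on a participant. -/
def projI (X : ℕ) (a : Interaction) : Option Act :=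
  if X = a.snd then some (.out a.snd a.rcv a.msg)
  else if X = a.rcv then some (.inp a.snd a.rcv a.msg)
  else none

def projL (X : ℕ) (l : List Interaction) : List Act := l.filterMap (projI X)

/-- Projection of a (possibly infinite) word of interactions on a participant. -/
noncomputable def proj (X : ℕ) : Word Interaction → Word Act
  | .fin l => .fin (projL X l)
  | .inf f =>
    if {i | (projI X (f i)).isSome = true}.Infinite then
      .inf (fun n =>
        (projI X (f (Nat.nth (fun i => (projI X (f i)).isSome = true) n))).getD (.out 0 0 0))
    else
      .fin (projL X ((List.range (sSup {i | (projI X (f i)).isSome = true} + 1)).map f))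

/-- A communicating system: a set of participants with a local language for each. -/
structure CSystem where
  P : Set ℕ
  lang : ℕ → Set (Word Act)

/-- Well-formedness of a communicating system: finitely many participants, each
assigned a prefix-closed `X`-local language over the participants of the system,
different from `{ε}`. -/
def IsSystem (S : CSystem) : Prop :=
  S.P.Finite ∧ ∀ X ∈ S.P,
    PrefixClosed (S.lang X) ∧
    (∀ w ∈ S.lang X, ∀ i a, Word.get? w i = some a → asubj a = X ∧ aptp a ⊆ S.P) ∧
    S.lang X ≠ {Word.fin []}

/-- Synchronous semantics of a communicating system. -/
def sem (S : CSystem) : Set (Word Interaction) :=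
  {w | wptp w ⊆ S.P ∧ ∀ X ∈ S.P, proj X w ∈ S.lang X}

/-- Projection of a global language on a participant. -/
def projLang (X : ℕ) (L : Set (Word Interaction)) : Set (Word Act) := proj X '' L

/-- The communicating system projected from a global language. -/
noncomputable def projSys (L : Set (Word Interaction)) : CSystem :=
  ⟨lptp L, fun X => projLang X L⟩

/-- Synchronous semantics of the projected system, `⟦L↾⟧`. -/
noncomputable def gsem (L : Set (Word Interaction)) : Set (Word Interaction) :=
  sem (projSys L)

/-- Closure under unknown information. -/
def CUI (L : Set (Word Interaction)) : Prop :=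
  ∀ (w1 w2 : List Interaction) (a : Interaction) (w : Word Interaction),
    Word.fin (w1 ++ [a]) ∈ L → Word.fin (w2 ++ [a]) ∈ L → w ∈ L →
    proj a.snd w = proj a.snd (Word.fin w1) →
    proj a.rcv w = proj a.rcv (Word.fin w2) →
    w.cat (Word.fin [a]) ∈ L

/-- Continuity: an infinite word belongs to `L` whenever infinitely many of its
finite prefixes do. -/
def WContinuous {σ : Type} (L : Set (Word σ)) : Prop :=
  ∀ g : ℕ → σ,
    {l : List σ | Word.fin l ∈ L ∧ Word.Pref (Word.fin l) (Word.inf g)}.Infinite →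
    Word.inf g ∈ L

/-- Standard-or-continuous language. -/
def SC (L : Set (Word Interaction)) : Prop :=
  (∀ w ∈ L, w.Finite) ∨ WContinuous L

/-- Maximal word in a language. -/
def MaximalIn {σ : Type} (L : Set (Word σ)) (w : Word σ) : Prop :=
  w ∈ L ∧ ∀ w' ∈ L, Word.Pref w w' → w' = w

/-- Participant `X` distinguishes two words. -/
def Distinguishes (X : ℕ) (w1 w2 : Word Interaction) : Prop :=
  proj X w1 ≠ proj X w2 ∧
  ¬ (Word.Pref (proj X w1) (proj X w2) ∧ proj X w1 ≠ proj X w2) ∧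
  ¬ (Word.Pref (proj X w2) (proj X w1) ∧ proj X w2 ≠ proj X w1)

/-- Branch-awareness of a global language. -/
def BranchAware (L : Set (Word Interaction)) : Prop :=
  ∀ X ∈ lptp L, ∀ w1 w2, MaximalIn L w1 → MaximalIn L w2 →
    proj X w1 ≠ proj X w2 → Distinguishes X w1 w2

/-- Swapping two adjacent independent interactions. -/
inductive SwapStep : List Interaction → List Interaction → Prop
  | mk (u v : List Interaction) (a b : Interaction) (h : iptp a ∩ iptp b = ∅) :
      SwapStep (u ++ a :: b :: v) (u ++ b :: a :: v)

/-- Mazurkiewicz trace equivalence on finite words. -/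
def TraceEqL : List Interaction → List Interaction → Prop :=
  Relation.ReflTransGen SwapStep

/-- `w ≪ w'` à la Gastin. -/
def wll (w w' : Word Interaction) : Prop :=
  ∀ l : List Interaction, Word.Pref (Word.fin l) w →
    ∃ l' h : List Interaction, Word.Pref (Word.fin l') w' ∧ TraceEqL (l ++ h) l'

/-- Trace equivalence on possibly infinite words. -/
def TraceEq : Word Interaction → Word Interaction → Prop
  | .fin l, .fin l' => TraceEqL l l'
  | w, w' => wll w w' ∧ wll w' w

/-- Finite-state automata with states `Fin n`, all states accepting. -/
structure FSA (σ : Type) where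
  n : ℕ
  q0 : Fin n
  tr : Fin n → σ → Fin n → Prop

inductive FinRun {σ : Type} (A : FSA σ) : Fin A.n → List σ → Fin A.n → Prop
  | nil (q : Fin A.n) : FinRun A q [] q
  | cons {q q' q'' : Fin A.n} {a : σ} {l : List σ} :
      A.tr q a q' → FinRun A q' l q'' → FinRun A q (a :: l) q''

/-- The language of an FSA with all states accepting: finite words labelling runs
from the initial state, together with infinite words labelling infinite runs
(Büchi acceptance with all states accepting). -/
def LangSet {σ : Type} (A : FSA σ) : Set (Word σ) :=
  {w | match w with
       | .fin l => ∃ q, FinRun A A.q0 l q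
       | .inf f => ∃ qs : ℕ → Fin A.n, qs 0 = A.q0 ∧ ∀ i, A.tr (qs i) (f i) (qs (i+1))}

/-- Configurations of a system of CFSMs. -/
def Conf (M : ℕ → FSA Act) : Type := (X : ℕ) → Fin (M X).n

/-- A synchronisation step of the product automaton. -/
def PStep (P : Finset ℕ) (M : ℕ → FSA Act) (s : Conf M) (a : Interaction) (s' : Conf M) : Prop :=
  a.snd ∈ P ∧ a.rcv ∈ P ∧
  (M a.snd).tr (s a.snd) (Act.out a.snd a.rcv a.msg) (s' a.snd) ∧
  (M a.rcv).tr (s a.rcv) (Act.inp a.snd a.rcv a.msg) (s' a.rcv) ∧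
  ∀ X, X ≠ a.snd → X ≠ a.rcv → s X = s' X

def initConf (M : ℕ → FSA Act) : Conf M := fun X => (M X).q0

inductive PRun (P : Finset ℕ) (M : ℕ → FSA Act) : Conf M → List Interaction → Conf M → Prop
  | nil (s : Conf M) : PRun P M s [] s
  | cons {s s' s'' : Conf M} {a : Interaction} {l : List Interaction} :
      PStep P M s a s' → PRun P M s' l s'' → PRun P M s (a :: l) s''

/-- The language of the synchronous product automaton of a system of CFSMs. -/
def prodLang (P : Finset ℕ) (M : ℕ → FSA Act) : Set (Word Interaction) :=
  {w | match w with
       | .fin l => ∃ s, PRun P M (initConf M) l s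
       | .inf f => ∃ cs : ℕ → Conf M, cs 0 = initConf M ∧
           ∀ i, PStep P M (cs i) (f i) (cs (i+1))}


/-!
Swapping independent interactions changes no projection. Conversely, suppose every projection
of `l` is a prefix of the corresponding projection of `l'`, and let `a` be the first letter of
`l`. The first letter of `l'` sharing a participant `X` with `a` has the same projection on `X`
as `a`, and the projection of an interaction on one of its participants determines it; so `a`
occurs in `l'` behind interactions independent of it and can be swapped to the front. By
induction `l` extends to a word trace equivalent to `l'`. Since the projection of an infinite
word is determined by the projections of its finite prefixes, `w ≪ w'` holds exactly when every
projection of `w` is a prefix of the corresponding one of `w'`.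
-/

namespace Word

variable {σ : Type}

def take : Word σ → ℕ → List σ
  | fin l, n => l.take n
  | inf f, n => (List.range n).map f

theorem pref_fin_iff {m : List σ} {w : Word σ} : Pref (fin m) w ↔ ∃ n, m = w.take n := by
  cases w with
  | fin l =>
    exact ⟨fun h => ⟨m.length, List.prefix_iff_eq_take.mp h⟩,
      fun ⟨n, h⟩ => h ▸ List.take_prefix n l⟩
  | inf f =>
    show (∀ i, i < m.length → m[i]? = some (f i)) ↔ _
    constructor
    · intro h
      refine ⟨m.length, List.ext_getElem? fun i => ?_⟩
      by_cases hi : i < m.length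
      · simp [take, h i hi, List.getElem?_range hi]
      · rw [List.getElem?_eq_none (by omega), List.getElem?_eq_none (by simp [take]; omega)]
    · rintro ⟨n, rfl⟩ i hi
      simp only [take, List.length_map, List.length_range] at hi
      simp [take, List.getElem?_range hi]

theorem pref_take (w : Word σ) (n : ℕ) : Pref (fin (w.take n)) w :=
  pref_fin_iff.mpr ⟨n, rfl⟩

theorem take_prefix_take (w : Word σ) {n n' : ℕ} (h : n ≤ n') : w.take n <+: w.take n' := by
  cases w with
  | fin l => exact List.take_prefix_take_left h
  | inf f =>
    refine List.IsPrefix.map f ?_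
    rw [← Nat.min_eq_left h, ← List.take_range]
    exact List.take_prefix _ _

theorem exists_get?_of_mem_take {w : Word σ} {n : ℕ} {a : σ} (h : a ∈ w.take n) :
    ∃ i, w.get? i = some a := by
  cases w with
  | fin l => exact List.mem_iff_getElem?.mp (List.mem_of_mem_take h)
  | inf f =>
    obtain ⟨i, -, rfl⟩ := List.mem_map.mp h
    exact ⟨i, rfl⟩

theorem take_take (w : Word σ) (k n : ℕ) : (w.take n).take k = w.take (min k n) := by
  cases w with
  | fin l => exact List.take_take
  | inf f => simp only [take, ← List.map_take, List.take_range]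

theorem pref_of_prefix_take {m : List σ} {w : Word σ} {n : ℕ} (h : m <+: w.take n) :
    Pref (fin m) w :=
  pref_fin_iff.mpr ⟨min m.length n, (List.prefix_iff_eq_take.mp h).trans (w.take_take _ _)⟩

theorem pref_of_forall_fin_pref {u v : Word σ} (h : ∀ m, Pref (fin m) u → Pref (fin m) v) :
    Pref u v := by
  cases u with
  | fin l => exact h l (List.prefix_refl l)
  | inf f =>
    have hf (n : ℕ) : ∃ n', (inf f).take n = v.take n' := pref_fin_iff.mp (h _ (pref_take _ n))
    cases v with
    | fin l =>
      obtain ⟨n', hn'⟩ := hf (l.length + 1)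
      have hlen := congrArg List.length hn'
      simp only [take, List.length_map, List.length_range, List.length_take] at hlen
      omega
    | inf g =>
      funext i
      obtain ⟨n', hn'⟩ := hf (i + 1)
      have hlen := congrArg List.length hn'
      simp only [take, List.length_map, List.length_range] at hlen
      subst hlen
      simpa [take, List.getElem?_range (Nat.lt_succ_self i)] using congrArg (·[i]?) hn'

theorem Pref.antisymm {u v : Word σ} (h : Pref u v) (h' : Pref v u) : u = v := by
  cases u <;> cases v
  · exact congrArg fin (List.IsPrefix.eq_of_length h (le_antisymm h.length_le h'.length_le))
  · exact h'.elim
  · exact h.elim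
  · exact congrArg inf h

theorem ext_pref {u v : Word σ} (h : ∀ m, Pref (fin m) u ↔ Pref (fin m) v) : u = v :=
  (pref_of_forall_fin_pref fun m => (h m).mp).antisymm
    (pref_of_forall_fin_pref fun m => (h m).mpr)

end Word

open Word

theorem projI_eq_none_iff {X : ℕ} {a : Interaction} : projI X a = none ↔ X ∉ iptp a := by
  unfold projI iptp
  split_ifs <;> simp_all

theorem exists_projI_eq_some {X : ℕ} {a : Interaction} (h : X ∈ iptp a) :
    ∃ b, projI X a = some b :=
  Option.ne_none_iff_exists'.mp (mt projI_eq_none_iff.mp (not_not.mpr h))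

theorem eq_of_projI_eq {X : ℕ} {a c : Interaction} (hX : X ∈ iptp a)
    (h : projI X a = projI X c) : a = c := by
  obtain ⟨s, r, m, hsr⟩ := a
  obtain ⟨s', r', m', hsr'⟩ := c
  simp only [iptp, projI, Set.mem_insert_iff, Set.mem_singleton_iff] at hX h
  split_ifs at h <;> simp_all

theorem projL_append (X : ℕ) (l l' : List Interaction) :
    projL X (l ++ l') = projL X l ++ projL X l' :=
  List.filterMap_append

theorem projL_eq_nil {X : ℕ} {l : List Interaction} :
    projL X l = [] ↔ ∀ a ∈ l, X ∉ iptp a := by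
  simp only [projL, List.filterMap_eq_nil_iff, projI_eq_none_iff]

theorem projL_cons_prefix_cons_iff (X : ℕ) (a : Interaction) (l l' : List Interaction) :
    projL X (a :: l) <+: projL X (a :: l') ↔ projL X l <+: projL X l' := by
  simp only [projL, List.filterMap_cons]
  cases projI X a <;> simp

theorem SwapStep.projL_eq {l l' : List Interaction} (h : SwapStep l l') (X : ℕ) :
    projL X l = projL X l' := by
  obtain ⟨u, v, a, b, hab⟩ := h
  have hX : projI X a = none ∨ projI X b = none := by
    simp only [projI_eq_none_iff, ← not_and_or]
    exact fun hX => Set.eq_empty_iff_forall_notMem.mp hab X hX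
  rw [projL_append, projL_append]
  simp only [projL, List.filterMap_cons]
  rcases hX with h | h <;> rw [h]

theorem SwapStep.length_eq {l l' : List Interaction} (h : SwapStep l l') :
    l.length = l'.length := by
  obtain ⟨⟩ := h
  simp

theorem SwapStep.symm {l l' : List Interaction} (h : SwapStep l l') : SwapStep l' l := by
  obtain ⟨u, v, a, b, hab⟩ := h
  exact SwapStep.mk u v b a (by rwa [Set.inter_comm])

theorem SwapStep.cons {l l' : List Interaction} (c : Interaction) (h : SwapStep l l') :
    SwapStep (c :: l) (c :: l') := by
  obtain ⟨u, v, a, b, hab⟩ := h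
  exact SwapStep.mk (c :: u) v a b hab

namespace TraceEqL

variable {l l' : List Interaction}

theorem projL_eq (h : TraceEqL l l') (X : ℕ) : projL X l = projL X l' := by
  induction h with
  | refl => rfl
  | tail _ hs ih => exact ih.trans (hs.projL_eq X)

theorem length_eq (h : TraceEqL l l') : l.length = l'.length := by
  induction h with
  | refl => rfl
  | tail _ hs ih => exact ih.trans hs.length_eq

theorem symm (h : TraceEqL l l') : TraceEqL l' l := by
  induction h with
  | refl => exact .refl
  | tail _ hs ih => exact (Relation.ReflTransGen.single hs.symm).trans ih

theorem cons (c : Interaction) (h : TraceEqL l l') : TraceEqL (c :: l) (c :: l') :=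
  Relation.ReflTransGen.lift (List.cons c) (fun _ _ hs => hs.cons c) _ _ h

end TraceEqL

theorem traceEqL_middle {a : Interaction} {u : List Interaction}
    (h : ∀ b ∈ u, iptp a ∩ iptp b = ∅) (v : List Interaction) :
    TraceEqL (u ++ a :: v) (a :: (u ++ v)) := by
  induction u with
  | nil => exact .refl
  | cons b u ih =>
    have hba : iptp b ∩ iptp a = ∅ := by rw [Set.inter_comm]; exact h b List.mem_cons_self
    exact ((ih fun c hc => h c (List.mem_cons_of_mem b hc)).cons b).tail
      (SwapStep.mk [] _ b a hba)

theorem exists_eq_append_cons_of_projL_prefix {a : Interaction} {t l : List Interaction}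
    (h : ∀ X ∈ iptp a, projL X (a :: t) <+: projL X l) :
    ∃ u v, l = u ++ a :: v ∧ ∀ b ∈ u, iptp a ∩ iptp b = ∅ := by
  induction l with
  | nil =>
    have hs : a.snd ∈ iptp a := by simp [iptp]
    have := h _ hs
    simp [projL, projI] at this
  | cons c l ih =>
    by_cases hac : iptp a ∩ iptp c = ∅
    · obtain ⟨u, v, rfl, hu⟩ := ih fun X hX => by
        have hXc : projI X c = none :=
          projI_eq_none_iff.mpr fun hXc => Set.eq_empty_iff_forall_notMem.mp hac X ⟨hX, hXc⟩
        simpa [projL, List.filterMap_cons, hXc] using h X hX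
      exact ⟨c :: u, v, rfl, List.forall_mem_cons.mpr ⟨hac, hu⟩⟩
    · obtain ⟨X, hXa, hXc⟩ := Set.nonempty_iff_ne_empty.mpr hac
      obtain ⟨b, hb⟩ := exists_projI_eq_some hXa
      obtain ⟨b', hb'⟩ := exists_projI_eq_some hXc
      have hpre := h X hXa
      simp only [projL, List.filterMap_cons, hb, hb', List.cons_prefix_cons] at hpre
      obtain rfl := eq_of_projI_eq hXa (hb.trans (hpre.1 ▸ hb'.symm))
      exact ⟨[], l, rfl, by simp⟩

theorem exists_traceEqL_append_of_projL_prefix {l l' : List Interaction}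
    (h : ∀ X, projL X l <+: projL X l') : ∃ r, TraceEqL (l ++ r) l' := by
  induction l generalizing l' with
  | nil => exact ⟨l', .refl⟩
  | cons a t ih =>
    obtain ⟨u, v, rfl, hu⟩ := exists_eq_append_cons_of_projL_prefix fun X _ => h X
    have hmid := traceEqL_middle hu v
    obtain ⟨r, hr⟩ := ih fun X =>
      (projL_cons_prefix_cons_iff X a t (u ++ v)).mp (hmid.projL_eq X ▸ h X)
    exact ⟨r, (hr.cons a).trans hmid.symm⟩

theorem Nat.count_le_count_sSup_succ {p : ℕ → Prop} [DecidablePred p] (hp : {i | p i}.Finite)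
    (n : ℕ) : Nat.count p n ≤ Nat.count p (sSup {i | p i} + 1) := by
  rcases le_total n (sSup {i | p i} + 1) with hn | hn
  · exact Nat.count_monotone p hn
  · obtain ⟨k, rfl⟩ := Nat.exists_eq_add_of_le hn
    have hbound (i : ℕ) (hi : p i) : i ≤ sSup {i | p i} := le_csSup hp.bddAbove hi
    have hzero : Nat.count (fun j => p (sSup {i | p i} + 1 + j)) k = 0 :=
      Nat.count_iff_forall_not.mpr fun j _ hj => by have := hbound _ hj; omega
    rw [Nat.count_add, hzero, Nat.add_zero]

section InfiniteWord

variable (X : ℕ) (f : ℕ → Interaction)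

def Visible (i : ℕ) : Prop := (projI X (f i)).isSome = true

noncomputable def visibleActs (n : ℕ) : Act :=
  (projI X (f (Nat.nth (Visible X f) n))).getD (.out 0 0 0)

theorem projL_take_inf (n : ℕ) :
    projL X ((inf f).take n) = (inf (visibleActs X f)).take (Nat.count (Visible X f) n) := by
  induction n with
  | zero => rfl
  | succ n ih =>
    simp only [take] at ih ⊢
    rw [List.range_succ, List.map_append, projL_append, ih, Nat.count_succ]
    by_cases hv : Visible X f n
    · obtain ⟨b, hb⟩ := Option.isSome_iff_exists.mp hv
      rw [if_pos hv, List.range_succ, List.map_append]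
      simp [projL, visibleActs, Nat.nth_count hv, hb]
    · rw [if_neg hv, Nat.add_zero]
      simp [projL, Option.not_isSome_iff_eq_none.mp hv]

theorem proj_inf_eq : proj X (inf f) =
    if {i | Visible X f i}.Infinite then inf (visibleActs X f)
    else fin (projL X ((inf f).take (sSup {i | Visible X f i} + 1))) :=
  rfl

end InfiniteWord

theorem pref_proj_iff {X : ℕ} {w : Word Interaction} {m : List Act} :
    Pref (fin m) (proj X w) ↔ ∃ n, m <+: projL X (w.take n) := by
  cases w with
  | fin l =>
    refine ⟨fun h => ⟨l.length, by rwa [take, List.take_length]⟩, fun ⟨n, h⟩ => ?_⟩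
    exact h.trans ((List.take_prefix n l).filterMap _)
  | inf f =>
    rw [proj_inf_eq]
    split_ifs with hinf
    · simp_rw [projL_take_inf]
      refine ⟨fun h => ?_, fun ⟨n, h⟩ => pref_of_prefix_take h⟩
      obtain ⟨k, rfl⟩ := pref_fin_iff.mp h
      refine ⟨Nat.nth (Visible X f) k + 1, take_prefix_take _ ?_⟩
      rw [Nat.count_nth_succ_of_infinite hinf]
      omega
    · refine ⟨fun h => ⟨_, h⟩, fun ⟨n, h⟩ => h.trans ?_⟩
      rw [projL_take_inf, projL_take_inf]
      exact take_prefix_take _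
        (Nat.count_le_count_sSup_succ (Set.not_infinite.mp hinf) n)

theorem proj_eq_nil_of_notMem_wptp {X : ℕ} {w : Word Interaction} (h : X ∉ wptp w) :
    proj X w = fin [] := by
  have hnil (n : ℕ) : projL X (w.take n) = [] := projL_eq_nil.mpr fun a ha hXa =>
    h (let ⟨i, hi⟩ := exists_get?_of_mem_take ha; ⟨i, a, hi, hXa⟩)
  refine ext_pref fun m => ?_
  simp only [pref_proj_iff, hnil, exists_const]
  rfl

theorem exists_forall_projL_prefix_take {l : List Interaction} {w : Word Interaction}
    (h : ∀ X, ∃ n, projL X l <+: projL X (w.take n)) :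
    ∃ N, ∀ X, projL X l <+: projL X (w.take N) := by
  choose n hn using h
  let P : Finset ℕ := l.toFinset.biUnion fun a => {a.snd, a.rcv}
  refine ⟨P.sup n, fun X => ?_⟩
  by_cases hX : X ∈ P
  · exact (hn X).trans ((w.take_prefix_take (Finset.le_sup hX)).filterMap _)
  · rw [projL_eq_nil.mpr fun a ha hXa => hX ?_]
    · exact List.nil_prefix
    · simpa [P, iptp] using ⟨a, ha, hXa⟩

theorem wll_iff_forall_proj {w w' : Word Interaction} :
    wll w w' ↔ ∀ X m, Pref (fin m) (proj X w) → Pref (fin m) (proj X w') := by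
  constructor
  · intro hw X m hm
    obtain ⟨n, hn⟩ := pref_proj_iff.mp hm
    obtain ⟨l', r, hl', hr⟩ := hw _ (pref_take w n)
    obtain ⟨n', rfl⟩ := pref_fin_iff.mp hl'
    refine pref_proj_iff.mpr ⟨n', hn.trans ?_⟩
    rw [← hr.projL_eq X, projL_append]
    exact List.prefix_append _ _
  · intro h l hl
    obtain ⟨n, rfl⟩ := pref_fin_iff.mp hl
    obtain ⟨N, hN⟩ := exists_forall_projL_prefix_take fun X =>
      pref_proj_iff.mp (h X _ (pref_proj_iff.mpr ⟨n, List.prefix_refl _⟩))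
    obtain ⟨r, hr⟩ := exists_traceEqL_append_of_projL_prefix hN
    exact ⟨_, r, pref_take w' N, hr⟩

theorem TraceEqL.wll {l l' : List Interaction} (h : TraceEqL l l') : wll (fin l) (fin l') := by
  rintro l₀ ⟨t, rfl⟩
  exact ⟨l', t, List.prefix_refl l', h⟩

theorem traceEqL_iff_wll {l l' : List Interaction} :
    TraceEqL l l' ↔ wll (fin l) (fin l') ∧ wll (fin l') (fin l) := by
  refine ⟨fun h => ⟨h.wll, h.symm.wll⟩, fun ⟨h, h'⟩ => ?_⟩
  obtain ⟨l₁, r, hl₁, hr⟩ := h l (List.prefix_refl l)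
  obtain ⟨l₂, r', hl₂, hr'⟩ := h' l' (List.prefix_refl l')
  have hlen := hr.length_eq
  have hlen' := hr'.length_eq
  have hle : l₁.length ≤ l'.length := List.IsPrefix.length_le hl₁
  have hle' : l₂.length ≤ l.length := List.IsPrefix.length_le hl₂
  simp only [List.length_append] at hlen hlen'
  obtain rfl : r = [] := List.eq_nil_of_length_eq_zero (by omega)
  obtain rfl : l₁ = l' := List.IsPrefix.eq_of_length hl₁ (by omega)
  simpa using hr

theorem traceEq_iff_wll {w w' : Word Interaction} : TraceEq w w' ↔ wll w w' ∧ wll w' w := by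
  cases w <;> cases w'
  · exact traceEqL_iff_wll
  all_goals exact Iff.rfl

theorem traceEq_iff_forall_proj_eq {w w' : Word Interaction} :
    TraceEq w w' ↔ ∀ X, proj X w = proj X w' := by
  rw [traceEq_iff_wll, wll_iff_forall_proj, wll_iff_forall_proj]
  refine ⟨fun ⟨h, h'⟩ X => ext_pref fun m => ⟨h X m, h' X m⟩, fun h => ⟨?_, ?_⟩⟩ <;>
    intro X m <;> simp [h X]

theorem stmt6_general (L : Set (Word Interaction))
    (w1 w2 : Word Interaction) (h1 : w1 ∈ L) (h2 : w2 ∈ L) :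
    TraceEq w1 w2 ↔ ∀ X ∈ lptp L, proj X w1 = proj X w2 := by
  rw [traceEq_iff_forall_proj_eq]
  refine ⟨fun h X _ => h X, fun h X => ?_⟩
  by_cases hX : X ∈ lptp L
  · exact h X hX
  · rw [proj_eq_nil_of_notMem_wptp fun hw => hX ⟨w1, h1, hw⟩,
      proj_eq_nil_of_notMem_wptp fun hw => hX ⟨w2, h2, hw⟩]

/-- Two words of a global language are trace equivalent iff their projections on
every participant of the language coincide. -/
theorem stmt6 (L : Set (Word Interaction)) (hL : IsGLang L)
    (w1 w2 : Word Interaction) (h1 : w1 ∈ L) (h2 : w2 ∈ L) :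
    TraceEq w1 w2 ↔ ∀ X ∈ lptp L, proj X w1 = proj X w2 :=
  stmt6_general L w1 w2 h1 h2
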